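/- Let N ≥ 1 be an integer and s ∈ (0,1) with N > 2s. Then there exists a constant C > 0, depending only on N and s, such that for every y ∈ ℝ^N with |y| ≥ 2, ∫_{ℝ^N} (1+|y−z|)^{−(N−2s)} (1+|z|)^{−N} dz ≤ C (ln|y|) (1+|y|)^{−(N−2s)}. -/

import Mathlib

/-!
Put `a = N - 2s` and `R = ‖y‖`. Where `‖z‖ ≤ ‖y - z‖`, the factor `(1 + ‖y - z‖)^(-a)` is at most
`2^a (1 + R)^(-a)` if `‖z‖ ≤ R` (then `‖y - z‖ ≥ R/2`) and at most `(1 + ‖z‖)^(-a)` otherwise, so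
the integrand is dominated by a radial function of `z`; where `‖y - z‖ < ‖z‖`, the two factors swap
roles and the majorant is radial in `y - z`. In polar coordinates the part inside the ball of
radius `R` gives `∫₁^{1+R} dx/x = log (1 + R)` for the first majorant and `O((1 + R)^(2s))` for
the second, which the prefactor `(1 + R)^(-N)` turns into `O((1 + R)^(-a))`; the parts outside
the ball are `O(R^(-a))`.
-/

open MeasureTheory Metric Set Module

noncomputable def nearFarProfile (R M q b : ℝ) (r : ℝ) : ℝ :=
  if r ≤ R then M * (1 + r) ^ (-q) else (1 + r) ^ (-b)

lemma nearFarProfile_of_le {R M q b r : ℝ} (h : r ≤ R) :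
    nearFarProfile R M q b r = M * (1 + r) ^ (-q) :=
  if_pos h

lemma nearFarProfile_of_lt {R M q b r : ℝ} (h : R < r) :
    nearFarProfile R M q b r = (1 + r) ^ (-b) :=
  if_neg h.not_ge

lemma nearFarProfile_nonneg {R M q b r : ℝ} (hM : 0 ≤ M) (hr : 0 ≤ r) :
    0 ≤ nearFarProfile R M q b r := by
  unfold nearFarProfile
  split_ifs <;> positivity

lemma rpow_neg_le_two_rpow_mul {x v p : ℝ} (hx : 0 < x) (hxv : x ≤ 2 * v) (hp : 0 ≤ p) :
    v ^ (-p) ≤ 2 ^ p * x ^ (-p) :=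
  calc v ^ (-p) ≤ (x / 2) ^ (-p) :=
        Real.rpow_le_rpow_of_nonpos (by positivity) (by linarith) (by linarith)
    _ = 2 ^ p * x ^ (-p) := by
        rw [Real.div_rpow hx.le zero_le_two, Real.rpow_neg zero_le_two, div_inv_eq_mul,
          mul_comm]

lemma rpow_mul_rpow_le_nearFarProfile {u v R p q : ℝ} (hu : 0 ≤ u) (huv : u ≤ v) (hR : 0 ≤ R)
    (hRuv : R ≤ u + v) (hp : 0 ≤ p) :
    (1 + v) ^ (-p) * (1 + u) ^ (-q) ≤ nearFarProfile R (2 ^ p * (1 + R) ^ (-p)) q (p + q) u := by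
  unfold nearFarProfile
  split_ifs with huR
  · gcongr
    exact rpow_neg_le_two_rpow_mul (by positivity) (by linarith) hp
  · calc (1 + v) ^ (-p) * (1 + u) ^ (-q) ≤ (1 + u) ^ (-p) * (1 + u) ^ (-q) :=
          mul_le_mul_of_nonneg_right
            (Real.rpow_le_rpow_of_nonpos (by positivity) (by linarith) (by linarith))
            (by positivity)
      _ = (1 + u) ^ (-(p + q)) := by rw [← Real.rpow_add (by positivity), neg_add]

lemma one_add_norm_sub_rpow_mul_le_nearFarProfile_add {E : Type*} [SeminormedAddCommGroup E]
    (y z : E) {p q : ℝ} (hp : 0 ≤ p) (hq : 0 ≤ q) :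
    (1 + ‖y - z‖) ^ (-p) * (1 + ‖z‖) ^ (-q) ≤
      nearFarProfile ‖y‖ (2 ^ p * (1 + ‖y‖) ^ (-p)) q (p + q) ‖z‖ +
        nearFarProfile ‖y‖ (2 ^ q * (1 + ‖y‖) ^ (-q)) p (q + p) ‖z - y‖ := by
  rcases le_total ‖z‖ ‖y - z‖ with h | h
  · exact le_add_of_le_of_nonneg (rpow_mul_rpow_le_nearFarProfile (norm_nonneg z) h
      (norm_nonneg y) (norm_le_norm_add_norm_sub' y z) hp)
      (nearFarProfile_nonneg (by positivity) (norm_nonneg _))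
  · rw [mul_comm, norm_sub_rev z y]
    exact le_add_of_nonneg_of_le (nearFarProfile_nonneg (by positivity) (norm_nonneg _))
      (rpow_mul_rpow_le_nearFarProfile (norm_nonneg _) h (norm_nonneg y)
        (by linarith [norm_le_norm_add_norm_sub' y z]) hq)

lemma integral_Ioc_pow_mul_one_add_rpow_le {d : ℕ} (hd : 1 ≤ d) {R : ℝ} (hR : 0 ≤ R) (q : ℝ) :
    ∫ r in Ioc 0 R, r ^ (d - 1) * (1 + r) ^ (-q) ≤
      ∫ x in (1 : ℝ)..1 + R, x ^ ((d : ℝ) - 1 - q) := by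
  have hcont : ContinuousOn (fun r : ℝ => (1 + r) ^ ((d : ℝ) - 1 - q)) (Icc 0 R) :=
    ContinuousOn.rpow_const (by fun_prop) fun r hr => Or.inl (by linarith [hr.1])
  calc ∫ r in Ioc 0 R, r ^ (d - 1) * (1 + r) ^ (-q)
      ≤ ∫ r in Ioc 0 R, (1 + r) ^ ((d : ℝ) - 1 - q) := by
        refine integral_mono_of_nonneg ?_ (hcont.integrableOn_Icc.mono_set Ioc_subset_Icc_self)
          (ae_restrict_of_forall_mem measurableSet_Ioc fun r hr => ?_)
        · filter_upwards [ae_restrict_mem measurableSet_Ioc] with r hr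
          have : 0 < r := hr.1
          positivity
        · have h1r : 0 < 1 + r := by linarith [hr.1]
          calc r ^ (d - 1) * (1 + r) ^ (-q) ≤ (1 + r) ^ (d - 1) * (1 + r) ^ (-q) := by
                gcongr
                · exact hr.1.le
                · linarith
            _ = (1 + r) ^ ((d : ℝ) - 1 - q) := by
                rw [← Real.rpow_natCast, ← Real.rpow_add h1r, Nat.cast_sub hd, Nat.cast_one,
                  sub_eq_add_neg _ q]
    _ = ∫ x in (1 : ℝ)..1 + R, x ^ ((d : ℝ) - 1 - q) := by
        rw [← intervalIntegral.integral_of_le hR, intervalIntegral.integral_comp_add_left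
          (fun x => x ^ ((d : ℝ) - 1 - q)), add_zero]

lemma integral_Ioi_pow_mul_one_add_rpow_le {d : ℕ} (hd : 1 ≤ d) {R b : ℝ} (hR : 0 < R)
    (hb : d < b) :
    ∫ r in Ioi R, r ^ (d - 1) * (1 + r) ^ (-b) ≤ R ^ ((d : ℝ) - b) / (b - d) := by
  have he : (d : ℝ) - 1 - b < -1 := by linarith
  calc ∫ r in Ioi R, r ^ (d - 1) * (1 + r) ^ (-b)
      ≤ ∫ r in Ioi R, r ^ ((d : ℝ) - 1 - b) := by
        refine integral_mono_of_nonneg ?_ (integrableOn_Ioi_rpow_of_lt he hR)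
          (ae_restrict_of_forall_mem measurableSet_Ioi fun r hr => ?_)
        · filter_upwards [ae_restrict_mem measurableSet_Ioi] with r hr
          have : 0 < r := hR.trans hr
          positivity
        · have hr0 : 0 < r := hR.trans hr
          calc r ^ (d - 1) * (1 + r) ^ (-b) ≤ r ^ (d - 1) * r ^ (-b) :=
                mul_le_mul_of_nonneg_left
                  (Real.rpow_le_rpow_of_nonpos hr0 (by linarith) (by linarith)) (by positivity)
            _ = r ^ ((d : ℝ) - 1 - b) := by
                rw [← Real.rpow_natCast, ← Real.rpow_add hr0, Nat.cast_sub hd, Nat.cast_one,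
                  sub_eq_add_neg _ b]
    _ = R ^ ((d : ℝ) - b) / (b - d) := by
        rw [integral_Ioi_rpow_of_lt he hR, neg_div, ← div_neg]
        ring_nf

section HaarMeasure

variable {E : Type*} [NormedAddCommGroup E] [NormedSpace ℝ E] [FiniteDimensional ℝ E]
  [MeasurableSpace E] [BorelSpace E] (μ : Measure E) [μ.IsAddHaarMeasure]

lemma setIntegral_norm_preimage [Nontrivial E] (g : ℝ → ℝ) {s : Set ℝ} (hs : MeasurableSet s) :
    ∫ z in norm ⁻¹' s, g ‖z‖ ∂μ =
      finrank ℝ E * μ.real (ball 0 1) * ∫ r in Ioi 0 ∩ s, r ^ (finrank ℝ E - 1) * g r := by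
  have h : (norm ⁻¹' s).indicator (fun z : E => g ‖z‖) = fun z => s.indicator g ‖z‖ :=
    funext fun _ => indicator_comp_right _
  rw [← integral_indicator (measurable_norm hs), h, integral_fun_norm_addHaar μ (s.indicator g),
    nsmul_eq_mul, smul_eq_mul, mul_assoc, ← setIntegral_indicator hs]
  simp_rw [smul_eq_mul, indicator_mul_right]

lemma integrable_nearFarProfile_norm {R M q b : ℝ} (hb : finrank ℝ E < b) :
    Integrable (fun z : E => nearFarProfile R M q b ‖z‖) μ := by
  have hball : IntegrableOn (fun z : E => nearFarProfile R M q b ‖z‖) (closedBall 0 R) μ := by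
    refine IntegrableOn.congr_fun ?_
      (fun z hz => (nearFarProfile_of_le (mem_closedBall_zero_iff.1 hz)).symm)
      measurableSet_closedBall
    have : Continuous fun z : E => M * (1 + ‖z‖) ^ (-q) :=
      continuous_const.mul (Continuous.rpow_const (by fun_prop) fun z => Or.inl (by positivity))
    exact this.continuousOn.integrableOn_compact (isCompact_closedBall 0 R)
  have hcompl : IntegrableOn (fun z : E => nearFarProfile R M q b ‖z‖) (closedBall 0 R)ᶜ μ :=
    (integrable_one_add_norm hb).integrableOn.congr_fun
      (fun z hz => (nearFarProfile_of_lt (by simpa using hz)).symm) measurableSet_closedBall.compl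
  simpa using hball.union hcompl

lemma integral_nearFarProfile_norm_le [Nontrivial E] {R M q b : ℝ} (hR : 0 < R) (hM : 0 ≤ M)
    (hb : finrank ℝ E < b) :
    ∫ z, nearFarProfile R M q b ‖z‖ ∂μ ≤ finrank ℝ E * μ.real (ball 0 1) *
      (M * (∫ x in (1 : ℝ)..1 + R, x ^ ((finrank ℝ E : ℝ) - 1 - q)) +
        R ^ ((finrank ℝ E : ℝ) - b) / (b - finrank ℝ E)) := by
  have hd : 1 ≤ finrank ℝ E := finrank_pos
  have hnear : ∫ z in closedBall (0 : E) R, nearFarProfile R M q b ‖z‖ ∂μ =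
      finrank ℝ E * μ.real (ball 0 1) *
        (M * ∫ r in Ioc 0 R, r ^ (finrank ℝ E - 1) * (1 + r) ^ (-q)) := by
    rw [setIntegral_congr_fun measurableSet_closedBall
        fun z hz => nearFarProfile_of_le (mem_closedBall_zero_iff.1 hz),
      show closedBall (0 : E) R = norm ⁻¹' Iic R by ext; simp,
      setIntegral_norm_preimage μ (fun r => M * (1 + r) ^ (-q)) measurableSet_Iic,
      Ioi_inter_Iic]
    simp_rw [mul_left_comm _ M, integral_const_mul]
    ring
  have hfar : ∫ z in (closedBall (0 : E) R)ᶜ, nearFarProfile R M q b ‖z‖ ∂μ =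
      finrank ℝ E * μ.real (ball 0 1) *
        ∫ r in Ioi R, r ^ (finrank ℝ E - 1) * (1 + r) ^ (-b) := by
    rw [setIntegral_congr_fun measurableSet_closedBall.compl
        fun z hz => nearFarProfile_of_lt (by simpa using hz),
      show (closedBall (0 : E) R)ᶜ = norm ⁻¹' Ioi R by ext; simp,
      setIntegral_norm_preimage μ (fun r => (1 + r) ^ (-b)) measurableSet_Ioi, Ioi_inter_Ioi,
      max_eq_right hR.le]
  rw [← integral_add_compl measurableSet_closedBall (integrable_nearFarProfile_norm μ hb),
    hnear, hfar, ← mul_add]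
  have hK : 0 ≤ (finrank ℝ E : ℝ) * μ.real (ball 0 1) := by positivity
  exact mul_le_mul_of_nonneg_left (add_le_add
    (mul_le_mul_of_nonneg_left (integral_Ioc_pow_mul_one_add_rpow_le hd hR.le q) hM)
    (integral_Ioi_pow_mul_one_add_rpow_le hd hR hb)) hK

lemma integral_one_add_norm_sub_rpow_mul_le_integral_nearFarProfile {p q : ℝ} (hp : 0 ≤ p)
    (hq : 0 ≤ q) (hpq : finrank ℝ E < p + q) (y : E) :
    ∫ z, (1 + ‖y - z‖) ^ (-p) * (1 + ‖z‖) ^ (-q) ∂μ ≤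
      (∫ z, nearFarProfile ‖y‖ (2 ^ p * (1 + ‖y‖) ^ (-p)) q (p + q) ‖z‖ ∂μ) +
        ∫ z, nearFarProfile ‖y‖ (2 ^ q * (1 + ‖y‖) ^ (-q)) p (q + p) ‖z‖ ∂μ := by
  set G₁ := nearFarProfile ‖y‖ (2 ^ p * (1 + ‖y‖) ^ (-p)) q (p + q)
  set G₂ := nearFarProfile ‖y‖ (2 ^ q * (1 + ‖y‖) ^ (-q)) p (q + p)
  have h₁ : Integrable (fun z : E => G₁ ‖z‖) μ := integrable_nearFarProfile_norm μ hpq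
  have h₂ : Integrable (fun z : E => G₂ ‖z - y‖) μ :=
    (integrable_nearFarProfile_norm μ (by linarith)).comp_sub_right y
  rw [← integral_sub_right_eq_self (fun z => G₂ ‖z‖) y, ← integral_add h₁ h₂]
  exact integral_mono_of_nonneg (ae_of_all _ fun z => by positivity) (h₁.add h₂)
    (ae_of_all _ fun z => one_add_norm_sub_rpow_mul_le_nearFarProfile_add y z hp hq)

lemma integral_one_add_norm_sub_rpow_mul_le [Nontrivial E] {a : ℝ} (ha : 0 < a)
    (had : a < finrank ℝ E) {y : E} (hy : 1 ≤ ‖y‖) :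
    ∫ z, (1 + ‖y - z‖) ^ (-a) * (1 + ‖z‖) ^ (-(finrank ℝ E : ℝ)) ∂μ ≤
      finrank ℝ E * μ.real (ball 0 1) * (2 ^ a * Real.log (1 + ‖y‖) +
        2 ^ (finrank ℝ E : ℝ) / (finrank ℝ E - a) + 2 * 2 ^ a / a) * (1 + ‖y‖) ^ (-a) := by
  set d : ℝ := (finrank ℝ E : ℝ)
  set R := ‖y‖
  set K := d * μ.real (ball (0 : E) 1)
  have hR : 0 < R := by linarith
  have hsplit := integral_one_add_norm_sub_rpow_mul_le_integral_nearFarProfile μ ha.le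
    (by positivity : 0 ≤ d) (by linarith) y
  have hnear₁ : ∫ x in (1 : ℝ)..1 + R, x ^ (d - 1 - d) = Real.log (1 + R) := by
    rw [show d - 1 - d = -1 by ring]
    simp only [Real.rpow_neg_one]
    rw [integral_inv (notMem_uIcc_of_lt one_pos (by linarith)), div_one]
  have hnear₂ : ∫ x in (1 : ℝ)..1 + R, x ^ (d - 1 - a) ≤ (1 + R) ^ (d - a) / (d - a) := by
    rw [integral_rpow (Or.inl (by linarith)), show d - 1 - a + 1 = d - a by ring, Real.one_rpow]
    gcongr
    linarith
  have hfar : R ^ (-a) ≤ 2 ^ a * (1 + R) ^ (-a) :=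
    rpow_neg_le_two_rpow_mul (by positivity) (by linarith) ha.le
  have h₁ := integral_nearFarProfile_norm_le μ (q := d) hR
    (by positivity : 0 ≤ 2 ^ a * (1 + R) ^ (-a)) (by linarith : d < a + d)
  have h₂ := integral_nearFarProfile_norm_le μ (q := a) hR
    (by positivity : 0 ≤ 2 ^ d * (1 + R) ^ (-d)) (by linarith : d < d + a)
  rw [hnear₁, show d - (a + d) = -a by ring, add_sub_cancel_right] at h₁
  rw [show d - (d + a) = -a by ring, add_sub_cancel_left] at h₂
  have hexp : (1 + R) ^ (-d) * (1 + R) ^ (d - a) = (1 + R) ^ (-a) := by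
    rw [← Real.rpow_add (by positivity)]
    ring_nf
  calc ∫ z, (1 + ‖y - z‖) ^ (-a) * (1 + ‖z‖) ^ (-d) ∂μ
      ≤ K * (2 ^ a * (1 + R) ^ (-a) * Real.log (1 + R) + R ^ (-a) / a) +
        K * (2 ^ d * (1 + R) ^ (-d) * ((1 + R) ^ (d - a) / (d - a)) + R ^ (-a) / a) := by
        refine hsplit.trans (add_le_add h₁ (h₂.trans ?_))
        gcongr
    _ ≤ K * (2 ^ a * (1 + R) ^ (-a) * Real.log (1 + R) + 2 ^ a * (1 + R) ^ (-a) / a) +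
        K * (2 ^ d * (1 + R) ^ (-d) * ((1 + R) ^ (d - a) / (d - a)) +
          2 ^ a * (1 + R) ^ (-a) / a) := by
        gcongr
    _ = K * (2 ^ a * Real.log (1 + R) + 2 ^ d / (d - a) + 2 * 2 ^ a / a) * (1 + R) ^ (-a) := by
        rw [mul_div_assoc', mul_assoc (2 ^ d), hexp]
        ring

theorem exists_integral_one_add_norm_sub_rpow_mul_le_log {a : ℝ} (ha : 0 < a)
    (had : a < finrank ℝ E) :
    ∃ C > 0, ∀ y : E, 2 ≤ ‖y‖ →
      ∫ z, (1 + ‖y - z‖) ^ (-a) * (1 + ‖z‖) ^ (-(finrank ℝ E : ℝ)) ∂μ ≤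
        C * Real.log ‖y‖ * (1 + ‖y‖) ^ (-a) := by
  have hd : 0 < finrank ℝ E := by exact_mod_cast ha.trans had
  have : Nontrivial E := nontrivial_of_finrank_pos hd
  set d : ℝ := (finrank ℝ E : ℝ)
  set K := d * μ.real (ball (0 : E) 1)
  have hK : 0 < K := mul_pos (by positivity)
    (ENNReal.toReal_pos (measure_ball_pos μ 0 one_pos).ne' measure_ball_lt_top.ne)
  set c := 2 ^ d / (d - a) + 2 * 2 ^ a / a
  have hc : 0 ≤ c := by
    have : 0 < d - a := by linarith
    positivity
  have hlog2 : 0 < Real.log 2 := Real.log_pos one_lt_two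
  refine ⟨K * (2 * 2 ^ a + c / Real.log 2), by positivity, fun y hy => ?_⟩
  set R := ‖y‖
  have hlog : Real.log (1 + R) ≤ 2 * Real.log R := by
    rw [← Real.log_rpow (by linarith), Real.rpow_two]
    exact Real.log_le_log (by linarith) (by nlinarith)
  have hconst : c ≤ c / Real.log 2 * Real.log R := by
    rw [div_mul_eq_mul_div, le_div_iff₀ hlog2]
    exact mul_le_mul_of_nonneg_left (Real.log_le_log two_pos hy) hc
  calc ∫ z, (1 + ‖y - z‖) ^ (-a) * (1 + ‖z‖) ^ (-d) ∂μ
      ≤ K * (2 ^ a * Real.log (1 + R) + c) * (1 + R) ^ (-a) := by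
        rw [← add_assoc]
        exact integral_one_add_norm_sub_rpow_mul_le μ ha had (by linarith)
    _ ≤ K * (2 ^ a * (2 * Real.log R) + c / Real.log 2 * Real.log R) * (1 + R) ^ (-a) := by
        gcongr
    _ = K * (2 * 2 ^ a + c / Real.log 2) * Real.log R * (1 + R) ^ (-a) := by ring

end HaarMeasure

theorem stmt_10 (N : ℕ) (s : ℝ) (hs : s ∈ Set.Ioo (0 : ℝ) 1)
    (hNs : 2 * s < N) :
    ∃ C > 0, ∀ y : EuclideanSpace ℝ (Fin N), 2 ≤ ‖y‖ →
      (∫ z : EuclideanSpace ℝ (Fin N),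
          (1 + ‖y - z‖) ^ (-((N : ℝ) - 2 * s)) * (1 + ‖z‖) ^ (-(N : ℝ))) ≤
        C * Real.log ‖y‖ * (1 + ‖y‖) ^ (-((N : ℝ) - 2 * s)) := by
  have h := exists_integral_one_add_norm_sub_rpow_mul_le_log
    (volume : Measure (EuclideanSpace ℝ (Fin N))) (a := N - 2 * s) (by linarith)
    (by rw [finrank_euclideanSpace_fin]; linarith [hs.1])
  rwa [finrank_euclideanSpace_fin] at h
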